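/- arXiv:1905.04324 — 2 statements merged into one kernel-verified Lean document; each statement's English description precedes it below -/
import Mathlib

section
/- There is a constant C > 0 such that for every nonnegative function f on ℤ with ∑_{k∈ℤ} f(k)² < ∞ and every n ≥ 1, n^{−3/2} ∑_{i₁,i₂,i₃=1}^n f(i₁−i₂) f(i₁−i₃) f(i₂−i₃) ≤ C n^{−1/2} (∑_{|k|≤n} f(k)^{3/2})². -/
/-!
Write `g = f ^ (3/2)`. Applying AM–GM to the cubes of `√(xy)`, `√(yz)`, `√(xz)` bounds each
summand `f(i₁-i₂) f(i₁-i₃) f(i₂-i₃)` by the mean of the three products of two of the `g`-values.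
Each of the three resulting triple sums is a sum, over a shared index, of products of row or
column sums of the matrix `(g (i - j))_{1 ≤ i, j ≤ n}`; all of these are at most
`S = ∑_{|k| ≤ n} g k` because `j ↦ i - j` is injective with values in `[-n, n]`. Hence the triple
sum is at most `n S²`, and the theorem holds with `C = 1`.
-/

open Finset

lemma sum_comp_le_sum_of_injOn {ι κ M : Type*} [AddCommMonoid M] [PartialOrder M]
    [IsOrderedAddMonoid M] {s : Finset ι} {t : Finset κ} {g : κ → M} {e : ι → κ}
    (hg : ∀ k ∈ t, 0 ≤ g k) (he : Set.InjOn e s) (hst : Set.MapsTo e s t) :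
    ∑ i ∈ s, g (e i) ≤ ∑ k ∈ t, g k := by
  classical
  rw [← sum_image he]
  exact sum_le_sum_of_subset_of_nonneg (image_subset_iff.mpr hst) fun k hk _ => hg k hk

lemma sum_Icc_sub_right_le {g : ℤ → ℝ} (hg : ∀ k, 0 ≤ g k) {n i : ℕ} (hi : i ∈ Icc 1 n) :
    ∑ j ∈ Icc 1 n, g ((i : ℤ) - j) ≤ ∑ k ∈ Icc (-(n : ℤ)) n, g k := by
  refine sum_comp_le_sum_of_injOn (fun k _ => hg k) (fun a _ b _ h => by simpa using h) ?_
  intro j hj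
  simp only [mem_Icc, coe_Icc, Set.mem_Icc] at hi hj ⊢
  omega

lemma sum_Icc_sub_left_le {g : ℤ → ℝ} (hg : ∀ k, 0 ≤ g k) {n i : ℕ} (hi : i ∈ Icc 1 n) :
    ∑ j ∈ Icc 1 n, g ((j : ℤ) - i) ≤ ∑ k ∈ Icc (-(n : ℤ)) n, g k := by
  refine sum_comp_le_sum_of_injOn (fun k _ => hg k) (fun a _ b _ h => by simpa using h) ?_
  intro j hj
  simp only [mem_Icc, coe_Icc, Set.mem_Icc] at hi hj ⊢
  omega

lemma sum_sum_mul_le_card_mul_sq {ι : Type*} {s : Finset ι} {A c : ι → ι → ℝ} {S : ℝ}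
    (hS : 0 ≤ S) (hA : ∀ i ∈ s, ∀ j ∈ s, 0 ≤ A i j) (hrow : ∀ i ∈ s, ∑ j ∈ s, A i j ≤ S)
    (hc : ∀ i ∈ s, ∀ j ∈ s, c i j ≤ S) :
    ∑ i ∈ s, ∑ j ∈ s, A i j * c i j ≤ #s * S ^ 2 :=
  calc ∑ i ∈ s, ∑ j ∈ s, A i j * c i j
      ≤ ∑ i ∈ s, (∑ j ∈ s, A i j) * S := by
        simp_rw [sum_mul]
        gcongr with i hi j hj
        exacts [hA i hi j hj, hc i hi j hj]
    _ ≤ ∑ _i ∈ s, S * S := by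
        gcongr with i hi
        exact hrow i hi
    _ = #s * S ^ 2 := by rw [sum_const, nsmul_eq_mul, sq]

lemma three_mul_mul_mul_le_add_pow_three {p q r : ℝ} (hp : 0 ≤ p) (hq : 0 ≤ q) (hr : 0 ≤ r) :
    3 * (p * q * r) ≤ p ^ 3 + q ^ 3 + r ^ 3 := by
  nlinarith [sq_nonneg (p - q), sq_nonneg (q - r), sq_nonneg (p - r),
    add_nonneg (add_nonneg hp hq) hr]

lemma sq_rpow_three_halves {a : ℝ} (ha : 0 ≤ a) : (a ^ 2) ^ ((3 : ℝ) / 2) = a ^ 3 := by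
  rw [← Real.rpow_natCast, ← Real.rpow_mul ha]; norm_num

lemma mul_mul_le_rpow_three_halves {x y z : ℝ} (hx : 0 ≤ x) (hy : 0 ≤ y) (hz : 0 ≤ z) :
    x * y * z ≤ (x ^ ((3 : ℝ) / 2) * y ^ ((3 : ℝ) / 2) + y ^ ((3 : ℝ) / 2) * z ^ ((3 : ℝ) / 2)
      + x ^ ((3 : ℝ) / 2) * z ^ ((3 : ℝ) / 2)) / 3 := by
  obtain ⟨a, ha, rfl⟩ : ∃ a, 0 ≤ a ∧ x = a ^ 2 := ⟨√x, Real.sqrt_nonneg x, (Real.sq_sqrt hx).symm⟩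
  obtain ⟨b, hb, rfl⟩ : ∃ b, 0 ≤ b ∧ y = b ^ 2 := ⟨√y, Real.sqrt_nonneg y, (Real.sq_sqrt hy).symm⟩
  obtain ⟨c, hc, rfl⟩ : ∃ c, 0 ≤ c ∧ z = c ^ 2 := ⟨√z, Real.sqrt_nonneg z, (Real.sq_sqrt hz).symm⟩
  have := three_mul_mul_mul_le_add_pow_three (mul_nonneg ha hb) (mul_nonneg hb hc)
    (mul_nonneg ha hc)
  simp only [sq_rpow_three_halves, ha, hb, hc]
  linear_combination this / 3

lemma sum_triple_le_mul_sq {f : ℤ → ℝ} (hf : ∀ k, 0 ≤ f k) (n : ℕ) :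
    ∑ i₁ ∈ Icc 1 n, ∑ i₂ ∈ Icc 1 n, ∑ i₃ ∈ Icc 1 n,
        f ((i₁ : ℤ) - i₂) * f ((i₁ : ℤ) - i₃) * f ((i₂ : ℤ) - i₃) ≤
      n * (∑ k ∈ Icc (-(n : ℤ)) n, f k ^ ((3 : ℝ) / 2)) ^ 2 := by
  set g : ℤ → ℝ := fun k => f k ^ ((3 : ℝ) / 2)
  set S := ∑ k ∈ Icc (-(n : ℤ)) n, g k
  have hg : ∀ k, 0 ≤ g k := fun k => Real.rpow_nonneg (hf k) _
  have hS : 0 ≤ S := sum_nonneg fun k _ => hg k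
  have hrow : ∀ i ∈ Icc 1 n, ∑ j ∈ Icc 1 n, g ((i : ℤ) - j) ≤ S :=
    fun i hi => sum_Icc_sub_right_le hg hi
  have hcol : ∀ i ∈ Icc 1 n, ∑ j ∈ Icc 1 n, g ((j : ℤ) - i) ≤ S :=
    fun i hi => sum_Icc_sub_left_le hg hi
  have bound : ∀ c : ℕ → ℕ → ℝ, (∀ i ∈ Icc 1 n, ∀ j ∈ Icc 1 n, c i j ≤ S) →
      ∑ i ∈ Icc 1 n, ∑ j ∈ Icc 1 n, g ((i : ℤ) - j) * c i j ≤ n * S ^ 2 := fun c hc => by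
    simpa using sum_sum_mul_le_card_mul_sq (A := fun i j : ℕ => g ((i : ℤ) - j)) hS
      (fun _ _ _ _ => hg _) hrow hc
  have T₁ : ∑ i₁ ∈ Icc 1 n, ∑ i₂ ∈ Icc 1 n, ∑ i₃ ∈ Icc 1 n,
      g ((i₁ : ℤ) - i₂) * g ((i₁ : ℤ) - i₃) ≤ n * S ^ 2 := by
    simp_rw [← mul_sum]
    exact bound _ fun i hi _ _ => hrow i hi
  have T₂ : ∑ i₁ ∈ Icc 1 n, ∑ i₂ ∈ Icc 1 n, ∑ i₃ ∈ Icc 1 n,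
      g ((i₁ : ℤ) - i₃) * g ((i₂ : ℤ) - i₃) ≤ n * S ^ 2 := by
    conv_lhs => enter [2, i₁]; rw [sum_comm]
    simp_rw [← mul_sum]
    exact bound _ fun _ _ j hj => hcol j hj
  have T₃ : ∑ i₁ ∈ Icc 1 n, ∑ i₂ ∈ Icc 1 n, ∑ i₃ ∈ Icc 1 n,
      g ((i₁ : ℤ) - i₂) * g ((i₂ : ℤ) - i₃) ≤ n * S ^ 2 := by
    simp_rw [← mul_sum]
    exact bound _ fun _ _ j hj => hrow j hj
  calc _ ≤ ∑ i₁ ∈ Icc 1 n, ∑ i₂ ∈ Icc 1 n, ∑ i₃ ∈ Icc 1 n,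
        (g ((i₁ : ℤ) - i₂) * g ((i₁ : ℤ) - i₃) + g ((i₁ : ℤ) - i₃) * g ((i₂ : ℤ) - i₃)
          + g ((i₁ : ℤ) - i₂) * g ((i₂ : ℤ) - i₃)) / 3 := by
        gcongr
        exact mul_mul_le_rpow_three_halves (hf _) (hf _) (hf _)
    _ ≤ n * S ^ 2 := by
        simp only [← sum_div, sum_add_distrib]
        linarith

/-- Triple-sum estimate: n^{−3/2} ∑_{i₁,i₂,i₃=1}^n f(i₁−i₂) f(i₁−i₃) f(i₂−i₃)
≤ C n^{−1/2} (∑_{|k|≤n} f(k)^{3/2})². -/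
theorem triple_sum_bound :
    ∃ C : ℝ, 0 < C ∧ ∀ f : ℤ → ℝ, (∀ k, 0 ≤ f k) →
      Summable (fun k : ℤ => f k ^ 2) → ∀ n : ℕ, 1 ≤ n →
      (n : ℝ) ^ (-(3 : ℝ) / 2) *
          ∑ i₁ ∈ Finset.Icc 1 n, ∑ i₂ ∈ Finset.Icc 1 n, ∑ i₃ ∈ Finset.Icc 1 n,
            f ((i₁ : ℤ) - i₂) * f ((i₁ : ℤ) - i₃) * f ((i₂ : ℤ) - i₃) ≤
        C * (n : ℝ) ^ (-(1 : ℝ) / 2) *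
          (∑ k ∈ Finset.Icc (-(n : ℤ)) (n : ℤ), f k ^ ((3 : ℝ) / 2)) ^ 2 := by
  refine ⟨1, one_pos, fun f hf _ n hn => ?_⟩
  have hn : (0 : ℝ) < n := by exact_mod_cast hn
  calc _ ≤ (n : ℝ) ^ (-(3 : ℝ) / 2) *
        (n * (∑ k ∈ Icc (-(n : ℤ)) n, f k ^ ((3 : ℝ) / 2)) ^ 2) := by
        gcongr
        exact sum_triple_le_mul_sq hf n
    _ = _ := by
        rw [← mul_assoc, ← Real.rpow_add_one hn.ne']
        norm_num
end

section
/- There is a constant C > 0 such that for every nonnegative function f on ℤ with ∑_{k∈ℤ} f(k)² < ∞ and every n ≥ 1, n^{−2} ∑_{i₁,i₂,i₃,i₄=1}^n f(i₁−i₂) f(i₂−i₃) f(i₃−i₄) f(i₁−i₄) ≤ C n^{−1} (∑_{|k|≤n} f(k)^{4/3})³. -/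
/-!
Write `g` for `f` cut off to `T = [-n, n]` and `ǧ a = g (-a)`. Summing the cyclic product over
`i₂` and `i₄` first bounds it by `∑_{i₁,i₃} (g ⋆ g)(i₁ - i₃) · (g ⋆ ǧ)(i₃ - i₁)`, and by AM-GM and
Young's inequality `‖u ⋆ v‖₂ ≤ ‖u‖_{4/3} ‖v‖_{4/3}` the inner sum over `i₃` is at most `S³`,
where `S = ∑_{|k| ≤ n} f(k)^{4/3}`. Summing over `i₁` gives `n S³`, i.e. the bound with `C = 1`.
-/

open Finset Pointwise

theorem sum_comp_le_of_support {β α : Type*} {I : Finset β} {T : Finset α} {e : β → α}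
    (he : Set.InjOn e I) {w : α → ℝ} (hw : ∀ a, 0 ≤ w a) (hwT : ∀ a ∉ T, w a = 0) :
    ∑ i ∈ I, w (e i) ≤ ∑ a ∈ T, w a := by
  classical
  rw [← sum_image he]
  calc ∑ a ∈ I.image e, w a ≤ ∑ a ∈ I.image e ∪ T, w a :=
        sum_le_sum_of_subset_of_nonneg subset_union_left fun a _ _ => hw a
    _ = ∑ a ∈ T, w a :=
        (sum_subset subset_union_right fun a _ haT => hwT a haT).symm

lemma rpow_sq {x : ℝ} (hx : 0 ≤ x) (y : ℝ) : (x ^ y) ^ 2 = x ^ (y * 2) := by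
  rw [← Real.rpow_mul_natCast hx]; norm_num

section Convolution

variable {α : Type*} [AddCommGroup α]

def convOn (T : Finset α) (u v : α → ℝ) (t : α) : ℝ :=
  ∑ a ∈ T, u a * v (t - a)

theorem sum_mul_le_convOn {β : Type*} {T : Finset α} {u v : α → ℝ} (hu : ∀ a, 0 ≤ u a)
    (hv : ∀ a, 0 ≤ v a) (huT : ∀ a ∉ T, u a = 0) {I : Finset β} {x : β → α}
    (hx : Set.InjOn x I) (p q : α) :
    ∑ j ∈ I, u (p - x j) * v (x j - q) ≤ convOn T u v (p - q) := by
  have hterm : ∀ j, u (p - x j) * v (x j - q) = u (p - x j) * v (p - q - (p - x j)) := by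
    intro j; rw [sub_sub_sub_cancel_left]
  simp only [hterm]
  exact sum_comp_le_of_support (fun i hi j hj h => hx hi hj (sub_right_injective h))
    (fun a => mul_nonneg (hu a) (hv _)) fun a ha => by rw [huT a ha, zero_mul]

theorem sq_convOn_le {T T' : Finset α} {u v : α → ℝ} (hu : ∀ a, 0 ≤ u a) (hv : ∀ a, 0 ≤ v a)
    (hvT : ∀ a ∉ T', v a = 0) (t : α) :
    convOn T u v t ^ 2 ≤ (∑ a ∈ T, u a ^ ((4 : ℝ) / 3) * v (t - a) ^ ((4 : ℝ) / 3)) *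
      √((∑ a ∈ T, u a ^ ((4 : ℝ) / 3)) * ∑ a ∈ T', v a ^ ((4 : ℝ) / 3)) := by
  have hy : ∀ a, 0 ≤ u a * v (t - a) := fun a => mul_nonneg (hu a) (hv _)
  have hsplit : ∀ a, u a * v (t - a) =
      (u a * v (t - a)) ^ ((2 : ℝ) / 3) * (u a * v (t - a)) ^ ((1 : ℝ) / 3) := by
    intro a; rw [← Real.rpow_add' (hy a) (by norm_num)]; norm_num
  have hshift : ∑ a ∈ T, v (t - a) ^ ((4 : ℝ) / 3) ≤ ∑ a ∈ T', v a ^ ((4 : ℝ) / 3) :=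
    sum_comp_le_of_support (fun a _ b _ h => sub_right_injective h)
      (fun a => Real.rpow_nonneg (hv a) _)
      fun a ha => by rw [hvT a ha, Real.zero_rpow (by norm_num)]
  have hcs : ∑ a ∈ T, (u a * v (t - a)) ^ ((2 : ℝ) / 3) ≤
      √((∑ a ∈ T, u a ^ ((4 : ℝ) / 3)) * ∑ a ∈ T', v a ^ ((4 : ℝ) / 3)) := by
    calc ∑ a ∈ T, (u a * v (t - a)) ^ ((2 : ℝ) / 3)
        = ∑ a ∈ T, u a ^ ((2 : ℝ) / 3) * v (t - a) ^ ((2 : ℝ) / 3) := by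
          simp only [Real.mul_rpow (hu _) (hv _)]
      _ ≤ √(∑ a ∈ T, (u a ^ ((2 : ℝ) / 3)) ^ 2) * √(∑ a ∈ T, (v (t - a) ^ ((2 : ℝ) / 3)) ^ 2) :=
          Real.sum_mul_le_sqrt_mul_sqrt _ _ _
      _ ≤ _ := by
          simp only [rpow_sq (hu _), rpow_sq (hv _)]
          norm_num
          rw [← Real.sqrt_mul (sum_nonneg fun a _ => Real.rpow_nonneg (hu a) _)]
          gcongr
          exact sum_nonneg fun a _ => Real.rpow_nonneg (hu a) _
  calc convOn T u v t ^ 2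
      = (∑ a ∈ T, (u a * v (t - a)) ^ ((2 : ℝ) / 3) * (u a * v (t - a)) ^ ((1 : ℝ) / 3)) ^ 2 := by
        rw [convOn]; simp only [← hsplit]
    _ ≤ (∑ a ∈ T, ((u a * v (t - a)) ^ ((2 : ℝ) / 3)) ^ 2) *
          ∑ a ∈ T, ((u a * v (t - a)) ^ ((1 : ℝ) / 3)) ^ 2 :=
        sum_mul_sq_le_sq_mul_sq _ _ _
    _ = (∑ a ∈ T, u a ^ ((4 : ℝ) / 3) * v (t - a) ^ ((4 : ℝ) / 3)) *
          ∑ a ∈ T, (u a * v (t - a)) ^ ((2 : ℝ) / 3) := by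
        simp only [rpow_sq (hy _)]; norm_num [Real.mul_rpow (hu _) (hv _)]
    _ ≤ _ :=
        mul_le_mul_of_nonneg_left hcs
          (sum_nonneg fun a _ => mul_nonneg (Real.rpow_nonneg (hu a) _) (Real.rpow_nonneg (hv _) _))

/-- Young's inequality `‖u ⋆ v‖₂ ≤ ‖u‖_{4/3} ‖v‖_{4/3}`, squared. -/
theorem sum_sq_convOn_le {T T' : Finset α} {u v : α → ℝ} (hu : ∀ a, 0 ≤ u a)
    (hv : ∀ a, 0 ≤ v a) (hvT : ∀ a ∉ T', v a = 0) (U : Finset α) :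
    ∑ t ∈ U, convOn T u v t ^ 2 ≤
      √((∑ a ∈ T, u a ^ ((4 : ℝ) / 3)) * ∑ a ∈ T', v a ^ ((4 : ℝ) / 3)) ^ 3 := by
  set p : ℝ := 4 / 3
  set G := ∑ a ∈ T, u a ^ p
  set H := ∑ a ∈ T', v a ^ p
  have hup : ∀ a, 0 ≤ u a ^ p := fun a => Real.rpow_nonneg (hu a) p
  have hvp : ∀ a, 0 ≤ v a ^ p := fun a => Real.rpow_nonneg (hv a) p
  have hGH : 0 ≤ G * H := mul_nonneg (sum_nonneg fun a _ => hup a) (sum_nonneg fun a _ => hvp a)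
  calc ∑ t ∈ U, convOn T u v t ^ 2
      ≤ ∑ t ∈ U, (∑ a ∈ T, u a ^ p * v (t - a) ^ p) * √(G * H) :=
        sum_le_sum fun t _ => sq_convOn_le hu hv hvT t
    _ = (∑ a ∈ T, u a ^ p * ∑ t ∈ U, v (t - a) ^ p) * √(G * H) := by
        rw [← sum_mul, sum_comm]; simp only [mul_sum]
    _ ≤ (∑ a ∈ T, u a ^ p * H) * √(G * H) := by
        gcongr with a
        · exact hup a
        · exact sum_comp_le_of_support (fun a _ b _ h => sub_left_injective h) hvp
            fun a ha => by rw [hvT a ha, Real.zero_rpow (by norm_num)]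
    _ = √(G * H) ^ 3 := by
        rw [← sum_mul, pow_succ, Real.sq_sqrt hGH]

theorem sum_sq_convOn_comp_le {γ : Type*} {T T' : Finset α} {u v : α → ℝ} (hu : ∀ a, 0 ≤ u a)
    (hv : ∀ a, 0 ≤ v a) (hvT : ∀ a ∉ T', v a = 0) {I : Finset γ} {e : γ → α}
    (he : Set.InjOn e I) :
    ∑ k ∈ I, convOn T u v (e k) ^ 2 ≤
      √((∑ a ∈ T, u a ^ ((4 : ℝ) / 3)) * ∑ a ∈ T', v a ^ ((4 : ℝ) / 3)) ^ 3 := by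
  classical
  rw [← sum_image (f := fun t => convOn T u v t ^ 2) he]
  exact sum_sq_convOn_le hu hv hvT _

theorem sum_cyclic_le {β : Type*} {T : Finset α} {g : α → ℝ} (hg : ∀ a, 0 ≤ g a)
    (hgT : ∀ a ∉ T, g a = 0) (I : Finset β) {x : β → α} (hx : Set.InjOn x I) :
    ∑ i₁ ∈ I, ∑ i₂ ∈ I, ∑ i₃ ∈ I, ∑ i₄ ∈ I,
        g (x i₁ - x i₂) * g (x i₂ - x i₃) * g (x i₃ - x i₄) * g (x i₁ - x i₄) ≤
      #I * (∑ a ∈ T, g a ^ ((4 : ℝ) / 3)) ^ 3 := by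
  classical
  set S := ∑ a ∈ T, g a ^ ((4 : ℝ) / 3)
  set g' : α → ℝ := fun a => g (-a)
  set P := convOn T g g
  set R := convOn T g g'
  have hS : 0 ≤ S := sum_nonneg fun a _ => Real.rpow_nonneg (hg a) _
  have hP : ∀ c, ∑ k ∈ I, P (c - x k) ^ 2 ≤ S ^ 3 := fun c =>
    (sum_sq_convOn_comp_le hg hg hgT fun i hi j hj h => hx hi hj (sub_right_injective h)).trans_eq
      (by rw [Real.sqrt_mul_self hS])
  have hR : ∀ c, ∑ k ∈ I, R (x k - c) ^ 2 ≤ S ^ 3 := by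
    intro c
    have hg'T : ∀ a ∉ -T, g' a = 0 := fun a ha => hgT _ (by simpa using ha)
    refine (sum_sq_convOn_comp_le hg (fun a => hg (-a)) hg'T
      fun i hi j hj h => hx hi hj (sub_left_injective h)).trans_eq ?_
    rw [sum_neg_index]
    simp only [neg_neg]
    rw [Real.sqrt_mul_self hS]
  have hPR : ∀ i ∈ I, ∀ k ∈ I,
      (∑ j ∈ I, g (x i - x j) * g (x j - x k)) * ∑ l ∈ I, g (x k - x l) * g (x i - x l) ≤
        (P (x i - x k) ^ 2 + R (x k - x i) ^ 2) / 2 := by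
    intro i _ k _
    have hA := sum_mul_le_convOn hg hg hgT hx (x i) (x k)
    have hB := sum_mul_le_convOn hg (fun a => hg (-a)) hgT hx (x k) (x i)
    simp only [neg_sub] at hB
    have := mul_le_mul hA hB (sum_nonneg fun l _ => mul_nonneg (hg _) (hg _))
      (sum_nonneg fun a _ => mul_nonneg (hg _) (hg _))
    nlinarith [two_mul_le_add_sq (P (x i - x k)) (R (x k - x i))]
  calc ∑ i₁ ∈ I, ∑ i₂ ∈ I, ∑ i₃ ∈ I, ∑ i₄ ∈ I,
        g (x i₁ - x i₂) * g (x i₂ - x i₃) * g (x i₃ - x i₄) * g (x i₁ - x i₄)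
      = ∑ i ∈ I, ∑ k ∈ I, (∑ j ∈ I, g (x i - x j) * g (x j - x k)) *
          ∑ l ∈ I, g (x k - x l) * g (x i - x l) := by
        refine sum_congr rfl fun i _ => ?_
        rw [sum_comm]
        simp only [sum_mul_sum, mul_assoc]
    _ ≤ ∑ i ∈ I, ∑ k ∈ I, (P (x i - x k) ^ 2 + R (x k - x i) ^ 2) / 2 :=
        sum_le_sum fun i hi => sum_le_sum fun k hk => hPR i hi k hk
    _ ≤ ∑ i ∈ I, S ^ 3 := by
        refine sum_le_sum fun i _ => ?_
        rw [← sum_div, sum_add_distrib]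
        linarith [hP (x i), hR (x i)]
    _ = #I * S ^ 3 := by rw [sum_const, nsmul_eq_mul]

theorem sum_cyclic_le_of_sub_mem {β : Type*} {f : α → ℝ} (hf : ∀ a, 0 ≤ f a) {T : Finset α}
    {I : Finset β} {x : β → α} (hx : Set.InjOn x I) (hT : ∀ i ∈ I, ∀ j ∈ I, x i - x j ∈ T) :
    ∑ i₁ ∈ I, ∑ i₂ ∈ I, ∑ i₃ ∈ I, ∑ i₄ ∈ I,
        f (x i₁ - x i₂) * f (x i₂ - x i₃) * f (x i₃ - x i₄) * f (x i₁ - x i₄) ≤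
      #I * (∑ a ∈ T, f a ^ ((4 : ℝ) / 3)) ^ 3 := by
  have hfT : ∀ a ∈ T, (T : Set α).indicator f a = f a := fun a ha =>
    Set.indicator_of_mem (mem_coe.2 ha) f
  refine (le_of_eq ?_).trans ((sum_cyclic_le (T := T) (Set.indicator_nonneg fun a _ => hf a)
    (fun a ha => Set.indicator_of_notMem (mt mem_coe.1 ha) f) I hx).trans_eq ?_)
  · refine sum_congr rfl fun i₁ h₁ => sum_congr rfl fun i₂ h₂ =>
      sum_congr rfl fun i₃ h₃ => sum_congr rfl fun i₄ h₄ => ?_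
    rw [hfT _ (hT _ h₁ _ h₂), hfT _ (hT _ h₂ _ h₃), hfT _ (hT _ h₃ _ h₄), hfT _ (hT _ h₁ _ h₄)]
  · rw [sum_congr rfl fun a ha => by rw [hfT a ha]]

end Convolution

/-- Cyclic quadruple-sum estimate: n^{−2} ∑_{i₁,i₂,i₃,i₄=1}^n
f(i₁−i₂) f(i₂−i₃) f(i₃−i₄) f(i₁−i₄) ≤ C n^{−1} (∑_{|k|≤n} f(k)^{4/3})³. -/
theorem quadruple_sum_bound :
    ∃ C : ℝ, 0 < C ∧ ∀ f : ℤ → ℝ, (∀ k, 0 ≤ f k) →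
      Summable (fun k : ℤ => f k ^ 2) → ∀ n : ℕ, 1 ≤ n →
      (n : ℝ) ^ (-(2 : ℝ)) *
          ∑ i₁ ∈ Finset.Icc 1 n, ∑ i₂ ∈ Finset.Icc 1 n, ∑ i₃ ∈ Finset.Icc 1 n,
            ∑ i₄ ∈ Finset.Icc 1 n,
              f ((i₁ : ℤ) - i₂) * f ((i₂ : ℤ) - i₃) * f ((i₃ : ℤ) - i₄) * f ((i₁ : ℤ) - i₄) ≤
        C * (n : ℝ)⁻¹ *
          (∑ k ∈ Finset.Icc (-(n : ℤ)) (n : ℤ), f k ^ ((4 : ℝ) / 3)) ^ 3 := by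
  refine ⟨1, one_pos, fun f hf _ n hn => ?_⟩
  have hcyc := sum_cyclic_le_of_sub_mem hf (T := Icc (-(n : ℤ)) n) (I := Icc 1 n)
    Nat.cast_injective.injOn fun i hi j hj => by simp only [mem_Icc] at hi hj ⊢; omega
  rw [Nat.card_Icc, Nat.add_sub_cancel] at hcyc
  have hn0 : (0 : ℝ) < n := by exact_mod_cast hn
  calc _ ≤ (n : ℝ) ^ (-(2 : ℝ)) * (n * (∑ k ∈ Icc (-(n : ℤ)) n, f k ^ ((4 : ℝ) / 3)) ^ 3) :=
        mul_le_mul_of_nonneg_left hcyc (by positivity)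
    _ = 1 * (n : ℝ)⁻¹ * (∑ k ∈ Icc (-(n : ℤ)) n, f k ^ ((4 : ℝ) / 3)) ^ 3 := by
        rw [Real.rpow_neg hn0.le, Real.rpow_two]
        field_simp
end
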